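/- arXiv:2507.08685 — 8 statements merged into one kernel-verified Lean document; each statement's English description precedes it below -/
import Mathlib

section
/- The single-pass edge-stream algorithm that initializes τ[v] := init[v] for every vertex v, and then, scanning temporal edges (u,v,t,λ) in nondecreasing order of starting time t, updates τ[v] := min(τ[v], t+λ) whenever τ[u] ≤ t and t+λ ≤ t_ω, computes for each vertex v the multiple-source earliest-arrival path time to v within the time window [t_α, t_ω]; moreover if the algorithm returns ∞ for v then v is unreachable within [t_α, t_ω] from every vertex u starting no earlier than init[u]. -/
open scoped Classical

structure TEdge (V : Type) where
  src : V
  dst : V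
  t : ℝ
  len : ℝ

variable {V : Type}

/-- Consecutive compatibility of temporal edges. -/
def compat (e f : TEdge V) : Prop := e.dst = f.src ∧ e.t + e.len ≤ f.t

/-- A temporal path from `x` to `y`: a nonempty list of temporal edges of `E`,
starting at `x`, ending at `y`, consecutively compatible. -/
def IsPath (E : Set (TEdge V)) (x y : V) (p : List (TEdge V)) : Prop :=
  p ≠ [] ∧ (∀ e ∈ p, e ∈ E) ∧ p.head?.map TEdge.src = some x ∧
    p.getLast?.map TEdge.dst = some y ∧ List.Chain' compat p

/-- Starting time of a temporal path. -/
def startT (p : List (TEdge V)) : ℝ := ((p.head?).map TEdge.t).getD 0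

/-- Ending (arrival) time of a temporal path. -/
def endT (p : List (TEdge V)) : ℝ := ((p.getLast?).map (fun e => e.t + e.len)).getD 0

/-- Distance (sum of traversal times) of a temporal path. -/
def distT (p : List (TEdge V)) : ℝ := (p.map TEdge.len).sum

/-- One step of the edge-stream earliest-arrival algorithm: scanning edge `e`,
update `τ e.dst` to `min (τ e.dst) (e.t + e.len)` whenever `τ e.src ≤ e.t`
and `e.t + e.len ≤ tω`. -/
noncomputable def stepEA (tω : ℝ) (τ : V → EReal) (e : TEdge V) : V → EReal :=
  fun v =>
    if v = e.dst ∧ τ e.src ≤ (e.t : EReal) ∧ e.t + e.len ≤ tω then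
      min (τ v) ((e.t + e.len : ℝ) : EReal)
    else τ v

/-- All edges of `p` lie within the window `[tα, tω]`. -/
def InWindowE (tα tω : ℝ) (p : List (TEdge V)) : Prop :=
  ∀ e ∈ p, tα ≤ e.t ∧ e.t + e.len ≤ tω

/-- The multiple-source earliest-arrival time to `y` within `[tα, tω]`:
the minimum over `init y` (waiting at `y`) and the arrival times of temporal
paths to `y` lying in the window and starting at some `x` no earlier than `init x`. -/
noncomputable def mseapTime (E : Set (TEdge V)) (init : V → EReal) (tα tω : ℝ) (y : V) : EReal :=
  sInf {a : EReal | a = init y ∨ ∃ p x, IsPath E x y p ∧ InWindowE tα tω p ∧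
    init x ≤ (startT p : EReal) ∧ a = ((endT p : ℝ) : EReal)}

/-! Soundness: every value the scan writes is `init v` or `e.t + e.len` for a scanned edge `e`
with `τ e.src ≤ e.t`; appending `e` to a window path realizing `τ e.src` (or taking `[e]` alone)
gives a window path realizing the new value, so the output is never below the MSEAP time.

Completeness: if a window path ends with `g` followed by `e`, then `g.t < g.t + g.len ≤ e.t`
because lengths are positive, so in the sorted stream `g` is scanned strictly before `e`.
Induction on the scanned prefix then gives `τ e.src ≤ e.t` at the moment `e` is scanned, hence
`τ e.dst ≤ e.t + e.len`. -/
section Paths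

variable {E : Set (TEdge V)} {x y : V} {p : List (TEdge V)} {e : TEdge V}

lemma startT_append_of_ne_nil (q : List (TEdge V)) (hp : p ≠ []) :
    startT (p ++ q) = startT p := by
  obtain ⟨a, p', rfl⟩ := List.exists_cons_of_ne_nil hp
  simp [startT]

@[simp] lemma startT_singleton (e : TEdge V) : startT [e] = e.t := by simp [startT]

@[simp] lemma endT_concat (p : List (TEdge V)) (e : TEdge V) :
    endT (p ++ [e]) = e.t + e.len := by simp [endT]

lemma IsPath.singleton (he : e ∈ E) : IsPath E e.src e.dst [e] :=
  ⟨by simp, by simpa using he, by simp, by simp, List.isChain_singleton e⟩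

lemma IsPath.concat (hp : IsPath E x e.src p) (he : e ∈ E) (hle : endT p ≤ e.t) :
    IsPath E x e.dst (p ++ [e]) := by
  obtain ⟨hne, hE, hhead, hlast, hchain⟩ := hp
  obtain ⟨q, f, rfl⟩ := (List.eq_nil_or_concat' p).resolve_left hne
  refine ⟨by simp, ?_, by simpa [hne] using hhead, by simp, ?_⟩
  · intro g hg
    rcases List.mem_append.mp hg with hg | hg
    exacts [hE g hg, by simp_all]
  · refine hchain.append (List.isChain_singleton e) ?_
    simp only [List.getLast?_concat, Option.mem_def, Option.some.injEq, List.head?_cons]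
    rintro _ rfl _ rfl
    exact ⟨by simpa using hlast, by simpa using hle⟩

lemma IsPath.of_concat (hp : IsPath E x y (p ++ [e])) (hne : p ≠ []) :
    IsPath E x e.src p ∧ endT p ≤ e.t := by
  obtain ⟨-, hE, hhead, -, hchain⟩ := hp
  obtain ⟨q, f, rfl⟩ := (List.eq_nil_or_concat' p).resolve_left hne
  obtain ⟨hchain, -, hfe⟩ := List.isChain_append.mp hchain
  have hfe : compat f e := hfe f (by simp) e (by simp)
  refine ⟨⟨hne, fun g hg => hE g (List.mem_append_left _ hg), by simpa [hne] using hhead,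
    by simp [hfe.1], hchain⟩, by simpa [endT] using hfe.2⟩

lemma IsPath.eq_dst_of_concat (hp : IsPath E x y (p ++ [e])) : y = e.dst := by
  simpa using hp.2.2.2.1.symm

lemma IsPath.eq_src_of_singleton (hp : IsPath E x y [e]) : x = e.src := by
  simpa using hp.2.2.1.symm

end Paths

lemma InWindowE.concat {tα tω : ℝ} {p : List (TEdge V)} {e : TEdge V} (hw : InWindowE tα tω p)
    (hα : tα ≤ e.t) (hω : e.t + e.len ≤ tω) : InWindowE tα tω (p ++ [e]) := by
  intro g hg
  rcases List.mem_append.mp hg with hg | hg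
  exacts [hw g hg, by simp_all]

lemma InWindowE.le_endT {tα tω : ℝ} {p : List (TEdge V)} (hw : InWindowE tα tω p)
    (hne : p ≠ []) (hlen : ∀ e ∈ p, 0 ≤ e.len) : tα ≤ endT p := by
  obtain ⟨q, f, rfl⟩ := (List.eq_nil_or_concat' p).resolve_left hne
  have hf : f ∈ q ++ [f] := by simp
  simpa using (hw f hf).1.trans (le_add_of_nonneg_right (hlen f hf))

-- `mseapTime E init tα tω y` is by definition `sInf {a | IsArrivalTime E init tα tω y a}`.
def IsArrivalTime (E : Set (TEdge V)) (init : V → EReal) (tα tω : ℝ) (y : V) (a : EReal) :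
    Prop :=
  a = init y ∨ ∃ p x, IsPath E x y p ∧ InWindowE tα tω p ∧
    init x ≤ (startT p : EReal) ∧ a = ((endT p : ℝ) : EReal)

section Soundness

variable {E : Set (TEdge V)} {init : V → EReal} {tα tω : ℝ}

lemma IsArrivalTime.tα_le
    (hinit : ∀ v, init v = ⊤ ∨ ((tα : EReal) ≤ init v ∧ init v ≤ (tω : EReal)))
    (hlen : ∀ e ∈ E, 0 ≤ e.len) {y : V} {a : EReal} (ha : IsArrivalTime E init tα tω y a) :
    (tα : EReal) ≤ a := by
  rcases ha with rfl | ⟨p, x, hp, hw, -, rfl⟩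
  · rcases hinit y with h | h
    exacts [h ▸ le_top, h.1]
  · exact EReal.coe_le_coe (hw.le_endT hp.1 fun e he => hlen e (hp.2.1 e he))

lemma IsArrivalTime.extend
    (hinit : ∀ v, init v = ⊤ ∨ ((tα : EReal) ≤ init v ∧ init v ≤ (tω : EReal)))
    (hlen : ∀ e ∈ E, 0 ≤ e.len) {e : TEdge V} {a : EReal}
    (ha : IsArrivalTime E init tα tω e.src a) (hae : a ≤ e.t) (he : e ∈ E) (hω : e.t + e.len ≤ tω) :
    IsArrivalTime E init tα tω e.dst ((e.t + e.len : ℝ) : EReal) := by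
  have hα : tα ≤ e.t := EReal.coe_le_coe_iff.mp ((ha.tα_le hinit hlen).trans hae)
  right
  rcases ha with rfl | ⟨p, x, hp, hw, hx, rfl⟩
  · exact ⟨[e], e.src, .singleton he, by simpa [InWindowE] using And.intro hα hω,
      by simpa using hae, rfl⟩
  · exact ⟨p ++ [e], x, hp.concat he (EReal.coe_le_coe_iff.mp hae), hw.concat hα hω,
      by rwa [startT_append_of_ne_nil _ hp.1], by simp⟩

lemma stepEA_isArrivalTime
    (hinit : ∀ v, init v = ⊤ ∨ ((tα : EReal) ≤ init v ∧ init v ≤ (tω : EReal)))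
    (hlen : ∀ e ∈ E, 0 ≤ e.len) {τ : V → EReal} {e : TEdge V} (he : e ∈ E)
    (hτ : ∀ w, IsArrivalTime E init tα tω w (τ w)) (w : V) :
    IsArrivalTime E init tα tω w (stepEA tω τ e w) := by
  unfold stepEA
  split_ifs with h
  · obtain ⟨rfl, hsrc, hω⟩ := h
    rcases min_choice (τ e.dst) ((e.t + e.len : ℝ) : EReal) with hm | hm <;> rw [hm]
    exacts [hτ _, (hτ e.src).extend hinit hlen hsrc he hω]
  · exact hτ w

lemma foldl_stepEA_isArrivalTime
    (hinit : ∀ v, init v = ⊤ ∨ ((tα : EReal) ≤ init v ∧ init v ≤ (tω : EReal)))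
    (hlen : ∀ e ∈ E, 0 ≤ e.len) (l : List (TEdge V)) (hl : ∀ e ∈ l, e ∈ E) {τ : V → EReal}
    (hτ : ∀ w, IsArrivalTime E init tα tω w (τ w)) (w : V) :
    IsArrivalTime E init tα tω w (l.foldl (stepEA tω) τ w) := by
  induction l generalizing τ with
  | nil => exact hτ w
  | cons e l ih =>
    exact ih (fun f hf => hl f (List.mem_cons_of_mem e hf))
      (stepEA_isArrivalTime hinit hlen (hl e List.mem_cons_self) hτ)

end Soundness

lemma mem_left_of_pairwise_le {α β : Type*} [Preorder β] {f : α → β} {l₁ l₂ : List α}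
    {a b : α} (hl : (l₁ ++ b :: l₂).Pairwise (fun a b => f a ≤ f b))
    (ha : a ∈ l₁ ++ b :: l₂) (hab : f a < f b) : a ∈ l₁ := by
  refine (List.mem_append.mp ha).resolve_right fun ha' => hab.not_ge ?_
  rcases List.mem_cons.mp ha' with rfl | ha'
  · exact le_rfl
  · exact List.rel_of_pairwise_cons (List.pairwise_append.mp hl).2.1 ha'

section Completeness

variable {tω : ℝ}

lemma stepEA_le (τ : V → EReal) (e : TEdge V) (v : V) : stepEA tω τ e v ≤ τ v := by
  unfold stepEA
  split_ifs
  exacts [min_le_left _ _, le_rfl]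

lemma foldl_stepEA_le (l : List (TEdge V)) (τ : V → EReal) (v : V) :
    l.foldl (stepEA tω) τ v ≤ τ v := by
  induction l generalizing τ with
  | nil => exact le_rfl
  | cons e l ih => exact (ih _).trans (stepEA_le τ e v)

lemma stepEA_dst_le {τ : V → EReal} {e : TEdge V} (hsrc : τ e.src ≤ e.t)
    (hω : e.t + e.len ≤ tω) : stepEA tω τ e e.dst ≤ ((e.t + e.len : ℝ) : EReal) := by
  simp only [stepEA, true_and, hsrc, hω, if_true]
  exact min_le_right _ _

variable {l : List (TEdge V)} {init : V → EReal} {tα : ℝ}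

lemma foldl_stepEA_le_endT_of_getLast_mem (hsort : l.Pairwise (fun e f => e.t ≤ f.t))
    (hpos : ∀ e ∈ l, 0 < e.len) (l₁ l₂ : List (TEdge V)) (hl : l = l₁ ++ l₂)
    {p : List (TEdge V)} {x v : V} {f : TEdge V} (hp : IsPath {e | e ∈ l} x v p)
    (hw : InWindowE tα tω p) (hx : init x ≤ (startT p : EReal)) (hf : p.getLast? = some f)
    (hfl : f ∈ l₁) : l₁.foldl (stepEA tω) init v ≤ ((endT p : ℝ) : EReal) := by
  induction l₁ using List.reverseRecOn generalizing l₂ p x v f with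
  | nil => simp at hfl
  | append_singleton l₀ e ih =>
    have hl' : l = l₀ ++ e :: l₂ := by simp [hl]
    rw [List.foldl_append, List.foldl_cons, List.foldl_nil]
    rcases List.mem_append.mp hfl with hf₀ | hfe
    · exact (stepEA_le _ e v).trans (ih (e :: l₂) hl' hp hw hx hf hf₀)
    obtain rfl : f = e := by simpa using hfe
    rw [← List.dropLast_append_getLast? f hf] at hp hw hx ⊢
    obtain rfl := hp.eq_dst_of_concat
    have hsrc : l₀.foldl (stepEA tω) init f.src ≤ f.t := by
      rcases List.eq_nil_or_concat' p.dropLast with hnil | ⟨q, g, hqg⟩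
      · rw [hnil, List.nil_append] at hp hx
        obtain rfl := hp.eq_src_of_singleton
        simpa using (foldl_stepEA_le l₀ init _).trans hx
      · rw [hqg] at hp hw hx
        obtain ⟨hp', hgf⟩ := hp.of_concat (by simp)
        have hg : g ∈ l := hp'.2.1 g (by simp)
        have hg₀ : g ∈ l₀ := by
          refine mem_left_of_pairwise_le (hl' ▸ hsort) (hl' ▸ hg) ?_
          have := hpos g hg
          simp only [endT_concat] at hgf
          linarith
        refine (ih (f :: l₂) hl' hp' (fun e he => hw e (List.mem_append_left _ he)) ?_
          List.getLast?_concat hg₀).trans (EReal.coe_le_coe hgf)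
        rwa [startT_append_of_ne_nil _ (by simp)] at hx
    simpa using stepEA_dst_le hsrc (hw f (by simp)).2

lemma foldl_stepEA_le_of_isArrivalTime (hsort : l.Pairwise (fun e f => e.t ≤ f.t))
    (hpos : ∀ e ∈ l, 0 < e.len) {v : V} {a : EReal}
    (ha : IsArrivalTime {e | e ∈ l} init tα tω v a) : l.foldl (stepEA tω) init v ≤ a := by
  rcases ha with rfl | ⟨p, x, hp, hw, hx, rfl⟩
  · exact foldl_stepEA_le l init v
  · obtain ⟨f, hf⟩ := Option.ne_none_iff_exists'.mp (List.getLast?_eq_none_iff.not.mpr hp.1)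
    exact foldl_stepEA_le_endT_of_getLast_mem hsort hpos l [] (by simp) hp hw hx hf
      (hp.2.1 f (List.mem_of_getLast? hf))

end Completeness

/-- Correctness of the single-pass edge-stream MSEAP algorithm: folding `stepEA`
over the edge stream (sorted by nondecreasing starting time) starting from `init`
computes the MSEAP time of every vertex; moreover if `⊤` (infinity) is returned for `v`
then `v` is unreachable within the window from every vertex `x` starting no earlier
than `init x`. -/
theorem stmt2 (l : List (TEdge V)) (tα tω : ℝ)
    (hsort : l.Pairwise (fun e f => e.t ≤ f.t))
    (hpos : ∀ e ∈ l, 0 < e.len)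
    (init : V → EReal)
    (hinit : ∀ v, init v = ⊤ ∨ ((tα : EReal) ≤ init v ∧ init v ≤ (tω : EReal))) :
    (∀ v, (l.foldl (stepEA tω) init) v = mseapTime {e | e ∈ l} init tα tω v) ∧
    (∀ v, (l.foldl (stepEA tω) init) v = ⊤ →
      ∀ p x, IsPath {e | e ∈ l} x v p → InWindowE tα tω p →
        ¬ init x ≤ (startT p : EReal)) := by
  refine ⟨fun v => le_antisymm ?_ ?_, fun v hv p x hp hw hx => ?_⟩
  · exact le_sInf fun a ha => foldl_stepEA_le_of_isArrivalTime hsort hpos ha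
  · exact sInf_le (foldl_stepEA_isArrivalTime hinit (fun e he => (hpos e he).le) l (fun _ h => h)
      (fun w => Or.inl rfl) v)
  · have h := foldl_stepEA_le_of_isArrivalTime (tα := tα) hsort hpos
      (Or.inr ⟨p, x, hp, hw, hx, rfl⟩)
    rw [hv, top_le_iff] at h
    exact EReal.coe_ne_top _ h
end

section
/- If there is a temporal beer path from x to y within [t_α, t_ω], then there exists a shortest temporal beer path from x to y within [t_α, t_ω], traversing some beer vertex b at a time t ∈ T_b, such that the subpath from x to b is a distance-wise non-dominated path within [t_α, t_ω] and the subpath from b to y is an inverse-distance-wise non-dominated path within [t_α, t_ω]. -/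
/-!
Positive traversal times make departure times strictly increase along a temporal path, so no
path repeats an edge and, `E` being finite, there are only finitely many paths. Take a shortest
beer path and split it at its visit of the beer vertex `b` at time `t`. Replace the prefix by a
Pareto-minimal path for (distance, arrival) that weakly dominates it, and the suffix by a
Pareto-minimal path for (distance, -departure) that weakly dominates it. The new prefix still
arrives by `t` and the new suffix still leaves after `t`, so the glued path is again a beer path
in the window, and it is no longer than the original one, hence still shortest.
-/

open scoped Classical

variable {V : Type}

/-- `p = q ++ r` witnesses a visit of beer vertex `b` at time `t`:
`b` is the endpoint of `q` (or the source `x` if `q` is empty), `t` is no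
earlier than the arrival of the last edge of `q` and no later than the
departure of the first edge of `r`. -/
def BeerSplit (x b : V) (t : ℝ) (p q r : List (TEdge V)) : Prop :=
  p = q ++ r ∧ ((q.getLast?).map TEdge.dst).getD x = b ∧
    (∀ e ∈ q.getLast?, e.t + e.len ≤ t) ∧ (∀ e ∈ r.head?, t ≤ e.t)

/-- A temporal beer path from `x` to `y`: a temporal path visiting some active
beer vertex `b ∈ B` at some time `t ∈ T b` between the arrival at `b` and the
departure from `b`. -/
def IsBeerPath (E : Set (TEdge V)) (B : Set V) (T : V → Set ℝ) (x y : V)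
    (p : List (TEdge V)) : Prop :=
  IsPath E x y p ∧ ∃ b ∈ B, ∃ t ∈ T b, ∃ q r, BeerSplit x b t p q r

/-- The path `p` starts no earlier than `tα` and ends no later than `tω`. -/
def InWin (tα tω : ℝ) (p : List (TEdge V)) : Prop :=
  tα ≤ startT p ∧ endT p ≤ tω

/-- `p` is a distance-wise non-dominated temporal `x`-`y` path within `[tα, tω]`. -/
def DistNonDomW (E : Set (TEdge V)) (x y : V) (tα tω : ℝ) (p : List (TEdge V)) : Prop :=
  IsPath E x y p ∧ InWin tα tω p ∧
  ¬ ∃ p', IsPath E x y p' ∧ InWin tα tω p' ∧ distT p' ≤ distT p ∧ endT p' ≤ endT p ∧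
      (distT p' < distT p ∨ endT p' < endT p)

/-- `p` is an inverse-distance-wise non-dominated temporal `x`-`y` path within `[tα, tω]`. -/
def InvDistNonDomW (E : Set (TEdge V)) (x y : V) (tα tω : ℝ) (p : List (TEdge V)) : Prop :=
  IsPath E x y p ∧ InWin tα tω p ∧
  ¬ ∃ p', IsPath E x y p' ∧ InWin tα tω p' ∧ distT p' ≤ distT p ∧ startT p ≤ startT p' ∧
      (distT p' < distT p ∨ startT p < startT p')

theorem Set.Finite.exists_pareto_le {α β γ : Type*} [Preorder β] [Preorder γ] {s : Set α}
    (hs : s.Finite) (f : α → β) (g : α → γ) {a : α} (ha : a ∈ s) :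
    ∃ m ∈ s, f m ≤ f a ∧ g m ≤ g a ∧
      ¬ ∃ m' ∈ s, f m' ≤ f m ∧ g m' ≤ g m ∧ (f m' < f m ∨ g m' < g m) := by
  obtain ⟨c, hca, hc⟩ :=
    (hs.image fun a ↦ (f a, g a)).exists_le_minimal (Set.mem_image_of_mem _ ha)
  obtain ⟨m, hm, rfl⟩ := hc.prop
  refine ⟨m, hm, hca.1, hca.2, fun ⟨m', hm', hf, hg, hlt⟩ ↦
    hc.not_lt (Set.mem_image_of_mem _ hm') ?_⟩
  exact Prod.lt_iff.2 (hlt.imp (⟨·, hg⟩) (⟨hf, ·⟩))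

theorem Set.Finite.setOf_nodup_forall_mem {α : Type*} {s : Set α} (hs : s.Finite) :
    {l : List α | l.Nodup ∧ ∀ a ∈ l, a ∈ s}.Finite := by
  have := hs.fintype
  refine ((List.finite_length_le s (Fintype.card s)).image (List.map Subtype.val)).subset ?_
  rintro l ⟨hnd, hl⟩
  lift l to List s using hl
  exact ⟨l, (hnd.of_map _).length_le_card, rfl⟩

section TemporalPaths

variable {E : Set (TEdge V)} {x y b : V} {t tα tω : ℝ} {p q r q' r' : List (TEdge V)}

theorem distT_append (q r : List (TEdge V)) : distT (q ++ r) = distT q + distT r := by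
  simp [distT]

theorem startT_append (hq : q ≠ []) (r : List (TEdge V)) : startT (q ++ r) = startT q := by
  simp [startT, List.head?_append_of_ne_nil _ hq]

theorem endT_append (q : List (TEdge V)) (hr : r ≠ []) : endT (q ++ r) = endT r := by
  simp [endT, List.getLast?_append_of_ne_nil _ hr]

theorem startT_le_endT_of_isChain_compat :
    ∀ {p : List (TEdge V)}, (∀ e ∈ p, 0 ≤ e.len) → p.IsChain compat → startT p ≤ endT p
  | [], _, _ => le_rfl
  | [a], hlen, _ => by simpa [startT, endT] using hlen a (by simp)
  | a :: b :: l, hlen, hc => by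
    rw [List.isChain_cons_cons] at hc
    have ih :=
      startT_le_endT_of_isChain_compat (fun e he ↦ hlen e (List.mem_cons_of_mem a he)) hc.2
    have ha := hlen a List.mem_cons_self
    have hab := hc.1.2
    simp only [startT, endT, List.head?_cons, List.getLast?_cons_cons, Option.map_some,
      Option.getD_some] at ih ⊢
    linarith

theorem nodup_of_isChain_compat (hpos : ∀ e ∈ p, 0 < e.len) (hc : p.IsChain compat) :
    p.Nodup := by
  have : (p.map TEdge.t).IsChain (· < ·) :=
    List.isChain_map _ |>.2 <| hc.imp_of_mem_imp fun e _ he _ h ↦ by linarith [hpos e he, h.2]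
  exact (List.isChain_iff_pairwise.1 this).nodup.of_map _

theorem isPath_append_iff (hq : q ≠ []) (hr : r ≠ []) :
    IsPath E x y (q ++ r) ↔ ∃ b, IsPath E x b q ∧ IsPath E b y r ∧ endT q ≤ startT r := by
  simp only [IsPath, List.Chain', List.isChain_append, List.head?_append_of_ne_nil _ hq,
    List.getLast?_append_of_ne_nil _ hr, List.getLast?_eq_some_getLast hq,
    List.head?_eq_some_head hr, List.mem_append, Option.mem_def, Option.some.injEq,
    forall_eq', compat, startT, endT, Option.map_some, Option.getD_some, ne_eq, hq, hr,
    List.append_eq_nil_iff, not_false_eq_true, and_false, true_and]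
  constructor
  · rintro ⟨hE, hx, hy, hcq, hcr, hb, ht⟩
    exact ⟨_, ⟨fun e he ↦ hE e (.inl he), hx, rfl, hcq⟩,
      ⟨fun e he ↦ hE e (.inr he), hb.symm, hy, hcr⟩, ht⟩
  · rintro ⟨b, ⟨hEq, hx, rfl, hcq⟩, ⟨hEr, hb, hy, hcr⟩, ht⟩
    exact ⟨fun e he ↦ he.elim (hEq e) (hEr e), hx, hy, hcq, hcr, hb.symm, ht⟩

theorem IsPath.getD_dst (hp : IsPath E x y p) (z : V) :
    (p.getLast?.map TEdge.dst).getD z = y := by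
  simp [hp.2.2.2.1]

theorem IsPath.startT_le_endT (hlen : ∀ e ∈ E, 0 ≤ e.len) (hp : IsPath E x y p) :
    startT p ≤ endT p :=
  startT_le_endT_of_isChain_compat (fun e he ↦ hlen e (hp.2.1 e he)) hp.2.2.2.2

theorem finite_setOf_isPath (hE : E.Finite) (hpos : ∀ e ∈ E, 0 < e.len) (x y : V) :
    {p | IsPath E x y p}.Finite :=
  hE.setOf_nodup_forall_mem.subset fun _ hp ↦
    ⟨nodup_of_isChain_compat (fun e he ↦ hpos e (hp.2.1 e he)) hp.2.2.2.2, hp.2.1⟩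

theorem exists_distNonDomW_le (hE : E.Finite) (hpos : ∀ e ∈ E, 0 < e.len)
    (hq : IsPath E x y q) (hw : InWin tα tω q) :
    ∃ q', DistNonDomW E x y tα tω q' ∧ distT q' ≤ distT q ∧ endT q' ≤ endT q := by
  obtain ⟨q', ⟨hq', hw'⟩, hd, he, hnd⟩ :=
    ((finite_setOf_isPath hE hpos x y).subset fun _ h ↦ h.1).exists_pareto_le distT endT
      (s := {p | IsPath E x y p ∧ InWin tα tω p}) ⟨hq, hw⟩
  exact ⟨q', ⟨hq', hw', fun ⟨p, hp, hpw, h⟩ ↦ hnd ⟨p, ⟨hp, hpw⟩, h⟩⟩, hd, he⟩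

theorem exists_invDistNonDomW_le (hE : E.Finite) (hpos : ∀ e ∈ E, 0 < e.len)
    (hr : IsPath E x y r) (hw : InWin tα tω r) :
    ∃ r', InvDistNonDomW E x y tα tω r' ∧ distT r' ≤ distT r ∧ startT r ≤ startT r' := by
  obtain ⟨r', ⟨hr', hw'⟩, hd, hs, hnd⟩ :=
    ((finite_setOf_isPath hE hpos x y).subset fun _ h ↦ h.1).exists_pareto_le distT
      (OrderDual.toDual ∘ startT) (s := {p | IsPath E x y p ∧ InWin tα tω p}) ⟨hr, hw⟩
  exact ⟨r', ⟨hr', hw', fun ⟨p, hp, hpw, h⟩ ↦ hnd ⟨p, ⟨hp, hpw⟩, h⟩⟩, hd, hs⟩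

namespace BeerSplit

theorem endT_left_le (hs : BeerSplit x b t p q r) (hq : q ≠ []) : endT q ≤ t := by
  simpa [endT, List.getLast?_eq_some_getLast hq] using hs.2.2.1

theorem le_startT_right (hs : BeerSplit x b t p q r) (hr : r ≠ []) : t ≤ startT r := by
  simpa [startT, List.head?_eq_some_head hr] using hs.2.2.2

theorem eq_of_right_eq_nil (hs : BeerSplit x b t p q r) (hp : IsPath E x y p) (hr : r = []) :
    b = y := by
  rw [← hs.2.1, ← hp.getD_dst x, hs.1, hr, List.append_nil]

theorem isPath_left (hs : BeerSplit x b t p q r) (hp : IsPath E x y p) (hq : q ≠ []) :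
    IsPath E x b q := by
  rcases eq_or_ne r [] with hr | hr
  · rwa [hs.eq_of_right_eq_nil hp hr, ← List.append_nil q, ← hr, ← hs.1]
  · obtain ⟨b', hq', -⟩ := (isPath_append_iff hq hr).1 (hs.1 ▸ hp)
    rwa [← hs.2.1, hq'.getD_dst]

theorem isPath_right (hs : BeerSplit x b t p q r) (hp : IsPath E x y p) (hr : r ≠ []) :
    IsPath E b y r := by
  obtain ⟨rfl, rfl, -⟩ := hs
  rcases eq_or_ne q [] with rfl | hq
  · simpa using hp
  · obtain ⟨b', hq', hr', -⟩ := (isPath_append_iff hq hr).1 hp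
    rwa [hq'.getD_dst]

theorem inWin_left (hlen : ∀ e ∈ E, 0 ≤ e.len) (hs : BeerSplit x b t p q r)
    (hp : IsPath E x y p) (hw : InWin tα tω p) (hq : q ≠ []) : InWin tα tω q := by
  refine ⟨by rw [← startT_append hq r, ← hs.1]; exact hw.1, ?_⟩
  rcases eq_or_ne r [] with rfl | hr
  · rw [← List.append_nil q, ← hs.1]; exact hw.2
  · calc endT q ≤ t := hs.endT_left_le hq
      _ ≤ startT r := hs.le_startT_right hr
      _ ≤ endT r := (hs.isPath_right hp hr).startT_le_endT hlen
      _ = endT p := by rw [hs.1, endT_append q hr]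
      _ ≤ tω := hw.2

theorem inWin_right (hlen : ∀ e ∈ E, 0 ≤ e.len) (hs : BeerSplit x b t p q r)
    (hp : IsPath E x y p) (hw : InWin tα tω p) (hr : r ≠ []) : InWin tα tω r := by
  refine ⟨?_, by rw [← endT_append q hr, ← hs.1]; exact hw.2⟩
  rcases eq_or_ne q [] with rfl | hq
  · rw [← List.nil_append r, ← hs.1]; exact hw.1
  · calc tα ≤ startT p := hw.1
      _ = startT q := by rw [hs.1, startT_append hq r]
      _ ≤ endT q := (hs.isPath_left hp hq).startT_le_endT hlen
      _ ≤ t := hs.endT_left_le hq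
      _ ≤ startT r := hs.le_startT_right hr

theorem exchange_left (hs : BeerSplit x b t p q r) (hp : IsPath E x y p) (hw : InWin tα tω p)
    (hq : q ≠ []) (hq' : IsPath E x b q') (hw' : InWin tα tω q') (hend : endT q' ≤ endT q) :
    IsPath E x y (q' ++ r) ∧ InWin tα tω (q' ++ r) ∧ BeerSplit x b t (q' ++ r) q' r := by
  have hq't : endT q' ≤ t := hend.trans (hs.endT_left_le hq)
  have hs' : BeerSplit x b t (q' ++ r) q' r :=
    ⟨rfl, hq'.getD_dst x, by simpa [endT, List.getLast?_eq_some_getLast hq'.1] using hq't,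
      hs.2.2.2⟩
  rcases eq_or_ne r [] with rfl | hr
  · obtain rfl := hs.eq_of_right_eq_nil hp rfl
    simpa [hq', hw'] using hs'
  · refine ⟨(isPath_append_iff hq'.1 hr).2 ⟨b, hq', hs.isPath_right hp hr,
      hq't.trans (hs.le_startT_right hr)⟩, ⟨?_, ?_⟩, hs'⟩
    · rw [startT_append hq'.1]; exact hw'.1
    · rw [endT_append _ hr, ← endT_append q hr, ← hs.1]; exact hw.2

theorem exchange_right (hs : BeerSplit x b t p q r) (hp : IsPath E x y p) (hw : InWin tα tω p)
    (hr : r ≠ []) (hr' : IsPath E b y r') (hw' : InWin tα tω r')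
    (hstart : startT r ≤ startT r') :
    IsPath E x y (q ++ r') ∧ InWin tα tω (q ++ r') ∧ BeerSplit x b t (q ++ r') q r' := by
  have htr' : t ≤ startT r' := (hs.le_startT_right hr).trans hstart
  have hs' : BeerSplit x b t (q ++ r') q r' :=
    ⟨rfl, hs.2.1, hs.2.2.1, by simpa [startT, List.head?_eq_some_head hr'.1] using htr'⟩
  rcases eq_or_ne q [] with rfl | hq
  · obtain rfl : x = b := by simpa using hs.2.1
    simpa [hr', hw'] using hs'
  · refine ⟨(isPath_append_iff hq hr'.1).2 ⟨b, hs.isPath_left hp hq, hr',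
      (hs.endT_left_le hq).trans htr'⟩, ⟨?_, ?_⟩, hs'⟩
    · rw [startT_append hq, ← startT_append hq r, ← hs.1]; exact hw.1
    · rw [endT_append _ hr'.1]; exact hw'.2

theorem exists_distNonDomW_left (hE : E.Finite) (hpos : ∀ e ∈ E, 0 < e.len)
    (hs : BeerSplit x b t p q r) (hp : IsPath E x y p) (hw : InWin tα tω p) :
    ∃ q', IsPath E x y (q' ++ r) ∧ InWin tα tω (q' ++ r) ∧ BeerSplit x b t (q' ++ r) q' r ∧
      distT q' ≤ distT q ∧ (q' ≠ [] → DistNonDomW E x b tα tω q') := by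
  rcases eq_or_ne q [] with rfl | hq
  · exact ⟨[], hs.1 ▸ hp, hs.1 ▸ hw, hs.1 ▸ hs, le_rfl, fun h ↦ absurd rfl h⟩
  · obtain ⟨q', hq', hd, he⟩ := exists_distNonDomW_le hE hpos (hs.isPath_left hp hq)
      (hs.inWin_left (fun e he ↦ (hpos e he).le) hp hw hq)
    obtain ⟨hp', hw', hs'⟩ := hs.exchange_left hp hw hq hq'.1 hq'.2.1 he
    exact ⟨q', hp', hw', hs', hd, fun _ ↦ hq'⟩

theorem exists_invDistNonDomW_right (hE : E.Finite) (hpos : ∀ e ∈ E, 0 < e.len)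
    (hs : BeerSplit x b t p q r) (hp : IsPath E x y p) (hw : InWin tα tω p) :
    ∃ r', IsPath E x y (q ++ r') ∧ InWin tα tω (q ++ r') ∧ BeerSplit x b t (q ++ r') q r' ∧
      distT r' ≤ distT r ∧ (r' ≠ [] → InvDistNonDomW E b y tα tω r') := by
  rcases eq_or_ne r [] with rfl | hr
  · exact ⟨[], hs.1 ▸ hp, hs.1 ▸ hw, hs.1 ▸ hs, le_rfl, fun h ↦ absurd rfl h⟩
  · obtain ⟨r', hr', hd, hst⟩ := exists_invDistNonDomW_le hE hpos (hs.isPath_right hp hr)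
      (hs.inWin_right (fun e he ↦ (hpos e he).le) hp hw hr)
    obtain ⟨hp', hw', hs'⟩ := hs.exchange_right hp hw hr hr'.1 hr'.2.1 hst
    exact ⟨r', hp', hw', hs', hd, fun _ ↦ hr'⟩

end BeerSplit

end TemporalPaths

/-- If there is a temporal beer path from `x` to `y` within `[tα, tω]`, then there
is a shortest temporal beer path within `[tα, tω]` through some active beer vertex
`b` at a time `t ∈ T b`, whose `x`-`b` subpath is distance-wise non-dominated and
whose `b`-`y` subpath is inverse-distance-wise non-dominated (within `[tα, tω]`). -/
theorem stmt4 (E : Set (TEdge V)) (hE : E.Finite) (hpos : ∀ e ∈ E, 0 < e.len)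
    (B : Set V) (T : V → Set ℝ) (x y : V) (tα tω : ℝ)
    (hex : ∃ p, IsBeerPath E B T x y p ∧ InWin tα tω p) :
    ∃ p, IsBeerPath E B T x y p ∧ InWin tα tω p ∧
      (∀ p', IsBeerPath E B T x y p' → InWin tα tω p' → distT p ≤ distT p') ∧
      ∃ b ∈ B, ∃ t ∈ T b, ∃ q r, BeerSplit x b t p q r ∧
        (q ≠ [] → DistNonDomW E x b tα tω q) ∧ (r ≠ [] → InvDistNonDomW E b y tα tω r) := by
  obtain ⟨p₀, ⟨⟨hp₀, b, hb, t, ht, q₀, r₀, hs₀⟩, hw₀⟩, hmin⟩ :=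
    Set.exists_min_image {p | IsBeerPath E B T x y p ∧ InWin tα tω p} distT
      ((finite_setOf_isPath hE hpos x y).subset fun _ h ↦ h.1.1) hex
  obtain ⟨q, hp₁, hw₁, hs₁, hdq, hq⟩ := hs₀.exists_distNonDomW_left hE hpos hp₀ hw₀
  obtain ⟨r, hp, hw, hs, hdr, hr⟩ := hs₁.exists_invDistNonDomW_right hE hpos hp₁ hw₁
  refine ⟨q ++ r, ⟨hp, b, hb, t, ht, q, r, hs⟩, hw, fun p' hp' hw' ↦ ?_,
    b, hb, t, ht, q, r, hs, hq, hr⟩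
  have hp₀p' := hmin p' ⟨hp', hw'⟩
  rw [hs₀.1, distT_append] at hp₀p'
  rw [distT_append]
  linarith
end

section
/- For any two vertices u and v of a temporal graph, the number of pairwise inverse-distance-wise non-dominated (distance, start) pairs realized by temporal u-v paths is at most the out-degree d_out(u) of u (the number of temporal edges leaving u). -/
open scoped Classical

variable {V : Type}

/-!
Two distinct pairs with the same starting time are strictly ordered by distance, so one dominates
the other; hence the starting times of a non-dominated family are pairwise distinct. The starting
time of a temporal `u`-path is the time of its first edge, which leaves `u`, so there are at most
as many of them as edges leaving `u`.
-/

/-- `InvDistDominates a b`: the (distance, start) pair `b` dominates `a`. -/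
def InvDistDominates {α β : Type*} [Preorder α] [Preorder β] (a b : α × β) : Prop :=
  b.1 ≤ a.1 ∧ a.2 ≤ b.2 ∧ (b.1 < a.1 ∨ a.2 < b.2)

theorem invDistDominates_of_fst_lt_of_snd_eq {α β : Type*} [Preorder α] [Preorder β]
    {a b : α × β} (hfst : b.1 < a.1) (hsnd : a.2 = b.2) : InvDistDominates a b :=
  ⟨hfst.le, hsnd.le, Or.inl hfst⟩

theorem injOn_snd_of_not_invDistDominates {α β : Type*} [LinearOrder α] [Preorder β]
    {s : Set (α × β)} (h : ∀ a ∈ s, ∀ b ∈ s, a ≠ b → ¬ InvDistDominates a b) :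
    s.InjOn Prod.snd := by
  intro a ha b hb hsnd
  by_contra hne
  rcases lt_trichotomy a.1 b.1 with hlt | heq | hgt
  · exact h b hb a ha (Ne.symm hne) (invDistDominates_of_fst_lt_of_snd_eq hlt hsnd.symm)
  · exact hne (Prod.ext heq hsnd)
  · exact h a ha b hb hne (invDistDominates_of_fst_lt_of_snd_eq hgt hsnd)

theorem IsPath.exists_mem_src_eq_t_eq_startT {E : Set (TEdge V)} {x y : V}
    {p : List (TEdge V)} (hp : IsPath E x y p) : ∃ e ∈ E, e.src = x ∧ e.t = startT p := by
  obtain ⟨hne, hmem, hhead, -, -⟩ := hp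
  obtain ⟨e, rest, rfl⟩ := List.exists_cons_of_ne_nil hne
  exact ⟨e, hmem e List.mem_cons_self, by simpa using hhead, rfl⟩

/-- Any family of pairwise inverse-distance-wise non-dominated (distance, start)
pairs realized by temporal `u`-`v` paths has size at most the out-degree of `u`. -/
theorem stmt6 [DecidableEq V] (E : Finset (TEdge V)) (u v : V)
    (F : Finset (ℝ × ℝ))
    (hreal : ∀ ds ∈ F, ∃ p, IsPath (↑E : Set (TEdge V)) u v p ∧
      distT p = ds.1 ∧ startT p = ds.2)
    (hnd : ∀ ds ∈ F, ∀ ds' ∈ F, ds ≠ ds' →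
      ¬ (ds'.1 ≤ ds.1 ∧ ds.2 ≤ ds'.2 ∧ (ds'.1 < ds.1 ∨ ds.2 < ds'.2))) :
    F.card ≤ (E.filter (fun e => e.src = u)).card := by
  have hsnd_inj : (F : Set (ℝ × ℝ)).InjOn Prod.snd := injOn_snd_of_not_invDistDominates hnd
  have hstarts : F.image Prod.snd ⊆ (E.filter (fun e => e.src = u)).image TEdge.t := by
    simp only [Finset.subset_iff, Finset.mem_image, Finset.mem_filter]
    rintro _ ⟨ds, hds, rfl⟩
    obtain ⟨p, hp, -, hstart⟩ := hreal ds hds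
    obtain ⟨e, he, hsrc, ht⟩ := hp.exists_mem_src_eq_t_eq_startT
    exact ⟨e, ⟨he, hsrc⟩, ht.trans hstart⟩
  calc F.card = (F.image Prod.snd).card := (Finset.card_image_of_injOn hsnd_inj).symm
    _ ≤ ((E.filter (fun e => e.src = u)).image TEdge.t).card := Finset.card_le_card hstarts
    _ ≤ (E.filter (fun e => e.src = u)).card := Finset.card_image_le
end

section
/- For any two vertices u and v of a temporal graph, the number of pairwise distance-wise non-dominated (distance, arrival) pairs realized by temporal u-v paths is at most the in-degree d_in(v) of v. -/
/-!
A `u`-`v` path arrives at the arrival time of its last edge, which is an in-edge of `v`; so the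
arrival times realised by `u`-`v` paths number at most `d_in(v)`. Two non-dominated pairs with the
same arrival time would be comparable in distance, so a non-dominated family is determined by its
arrival times.
-/

open scoped Classical

variable {V : Type}

def TEdge.arrival (e : TEdge V) : ℝ := e.t + e.len

theorem IsPath.exists_inEdge_endT_eq_arrival {E : Set (TEdge V)} {x y : V} {p : List (TEdge V)}
    (hp : IsPath E x y p) : ∃ e ∈ E, e.dst = y ∧ endT p = e.arrival := by
  obtain ⟨hne, hE, -, hlast, -⟩ := hp
  have hget : p.getLast? = some (p.getLast hne) := List.getLast?_eq_some_getLast hne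
  rw [hget, Option.map_some, Option.some_inj] at hlast
  exact ⟨p.getLast hne, hE _ (List.getLast_mem hne), hlast, by simp [endT, hget, TEdge.arrival]⟩

theorem injOn_snd_of_not_dominated {α β : Type*} [LinearOrder α] [Preorder β] {F : Set (α × β)}
    (hnd : ∀ a ∈ F, ∀ b ∈ F, a ≠ b → ¬ (b.1 ≤ a.1 ∧ b.2 ≤ a.2 ∧ (b.1 < a.1 ∨ b.2 < a.2))) :
    Set.InjOn Prod.snd F := by
  intro a ha b hb hab
  by_contra hne
  rcases lt_trichotomy a.1 b.1 with h | h | h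
  · exact hnd b hb a ha (Ne.symm hne) ⟨h.le, hab.le, Or.inl h⟩
  · exact hne (Prod.ext h hab)
  · exact hnd a ha b hb hne ⟨h.le, hab.ge, Or.inl h⟩

/-- Any family of pairwise distance-wise non-dominated (distance, arrival)
pairs realized by temporal `u`-`v` paths has size at most the in-degree of `v`. -/
theorem stmt7 [DecidableEq V] (E : Finset (TEdge V)) (u v : V)
    (F : Finset (ℝ × ℝ))
    (hreal : ∀ da ∈ F, ∃ p, IsPath (↑E : Set (TEdge V)) u v p ∧
      distT p = da.1 ∧ endT p = da.2)
    (hnd : ∀ da ∈ F, ∀ da' ∈ F, da ≠ da' →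
      ¬ (da'.1 ≤ da.1 ∧ da'.2 ≤ da.2 ∧ (da'.1 < da.1 ∨ da'.2 < da.2))) :
    F.card ≤ (E.filter (fun e => e.dst = v)).card := by
  have harrivals : F.image Prod.snd ⊆ (E.filter (fun e => e.dst = v)).image TEdge.arrival := by
    simp only [Finset.subset_iff, Finset.mem_image, Finset.mem_filter, forall_exists_index, and_imp]
    rintro _ da hda rfl
    obtain ⟨p, hp, -, hend⟩ := hreal da hda
    obtain ⟨e, heE, hdst, harr⟩ := hp.exists_inEdge_endT_eq_arrival
    exact ⟨e, ⟨heE, hdst⟩, harr ▸ hend⟩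
  calc F.card = (F.image Prod.snd).card :=
        (Finset.card_image_of_injOn (injOn_snd_of_not_dominated hnd)).symm
    _ ≤ ((E.filter (fun e => e.dst = v)).image TEdge.arrival).card := Finset.card_le_card harrivals
    _ ≤ (E.filter (fun e => e.dst = v)).card := Finset.card_image_le
end

section
/- If a temporal edge e = (u,v,t,λ) is dominated by another edge e' = (u,v,t',λ'), then for every temporal path P using e there exists a temporal path P' using e' instead of e with start(P') ≥ start(P), end(P') ≤ end(P), and visiting the same sequence of vertices with the same waiting intervals except shrunk at u and v; in particular, removing dominated edges from a temporal graph does not change the earliest-arrival time between any pair of vertices within any time window. -/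
open scoped Classical

variable {V : Type}

/-- Edge `e'` dominates edge `e`. -/
def Dominates (e' e : TEdge V) : Prop :=
  e'.src = e.src ∧ e'.dst = e.dst ∧ e.t ≤ e'.t ∧ e'.t + e'.len ≤ e.t + e.len ∧
    (e.t < e'.t ∨ e'.t + e'.len < e.t + e.len)

/-- Earliest-arrival time from `x` to `y` within `[tα, tω]` (⊤ if unreachable). -/
noncomputable def eaTime (E : Set (TEdge V)) (x y : V) (tα tω : ℝ) : EReal :=
  sInf {a : EReal | ∃ p, IsPath E x y p ∧ tα ≤ startT p ∧ endT p ≤ tω ∧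
    a = ((endT p : ℝ) : EReal)}

/-!
Replacing edges of a temporal path by edges that leave no earlier and arrive no later keeps
consecutive compatibility, so the result is again a temporal path through the same vertices,
starting no earlier and ending no later. In a finite edge set every edge is weakly dominated by
an undominated one (take a weak dominator of minimal length: an edge dominating it would be a
shorter one), so every path can be transformed into a path of undominated edges with no later
arrival, and the earliest-arrival times coincide.
-/

def WeaklyDominates (e' e : TEdge V) : Prop :=
  e'.src = e.src ∧ e'.dst = e.dst ∧ e.t ≤ e'.t ∧ e'.t + e'.len ≤ e.t + e.len

namespace WeaklyDominates

variable {a b e e' e'' : TEdge V}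

theorem refl (e : TEdge V) : WeaklyDominates e e := ⟨rfl, rfl, le_rfl, le_rfl⟩

theorem trans (h₁ : WeaklyDominates e'' e') (h₂ : WeaklyDominates e' e) :
    WeaklyDominates e'' e :=
  ⟨h₁.1.trans h₂.1, h₁.2.1.trans h₂.2.1, h₂.2.2.1.trans h₁.2.2.1, h₁.2.2.2.trans h₂.2.2.2⟩

theorem compat_left (h : WeaklyDominates e' e) (hc : compat a e) : compat a e' :=
  ⟨hc.1.trans h.1.symm, hc.2.trans h.2.2.1⟩

theorem compat_right (h : WeaklyDominates e' e) (hc : compat e b) : compat e' b :=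
  ⟨h.2.1.trans hc.1, h.2.2.2.trans hc.2⟩

end WeaklyDominates

theorem Dominates.weaklyDominates {e' e : TEdge V} (h : Dominates e' e) : WeaklyDominates e' e :=
  ⟨h.1, h.2.1, h.2.2.1, h.2.2.2.1⟩

theorem Dominates.len_lt {e' e : TEdge V} (h : Dominates e' e) : e'.len < e.len := by
  rcases h with ⟨-, -, h₁, h₂, h₃ | h₃⟩ <;> linarith

theorem List.Forall₂.head?_rel {α β : Type*} {R : α → β → Prop} {l₁ : List α} {l₂ : List β}
    (h : List.Forall₂ R l₁ l₂) : Option.Rel R l₁.head? l₂.head? := by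
  cases h with
  | nil => exact .none
  | cons hab _ => exact .some hab

theorem List.Forall₂.getLast?_rel {α β : Type*} {R : α → β → Prop} {l₁ : List α} {l₂ : List β}
    (h : List.Forall₂ R l₁ l₂) : Option.Rel R l₁.getLast? l₂.getLast? := by
  simpa only [List.head?_reverse] using (List.forall₂_reverse_iff.2 h).head?_rel

theorem Option.Rel.map_eq {α β γ : Type*} {R : α → β → Prop} {f : α → γ} {g : β → γ}
    (hfg : ∀ a b, R a b → f a = g b) {o₁ : Option α} {o₂ : Option β} (h : Option.Rel R o₁ o₂) :
    o₁.map f = o₂.map g := by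
  cases h with
  | none => rfl
  | some hab => exact congrArg Option.some (hfg _ _ hab)

theorem Option.Rel.getD_map {α β γ : Type*} {R : α → β → Prop} {r : γ → γ → Prop}
    {f : α → γ} {g : β → γ} (hfg : ∀ a b, R a b → r (f a) (g b)) {c : γ} (hc : r c c)
    {o₁ : Option α} {o₂ : Option β} (h : Option.Rel R o₁ o₂) :
    r ((o₁.map f).getD c) ((o₂.map g).getD c) := by
  cases h with
  | none => exact hc
  | some hab => exact hfg _ _ hab

section PathDomination

variable {E E' : Set (TEdge V)} {x y : V} {p q : List (TEdge V)}

theorem isChain_compat_of_forall₂ (h : List.Forall₂ WeaklyDominates q p)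
    (hp : List.IsChain compat p) : List.IsChain compat q := by
  induction h with
  | nil => exact .nil
  | @cons a b l₁ l₂ hab hl ih =>
    rw [List.isChain_cons] at hp ⊢
    refine ⟨fun c hc => ?_, ih hp.2⟩
    cases hl with
    | nil => simp at hc
    | cons hcd _ =>
      obtain rfl : _ = c := Option.some_inj.1 hc
      exact hcd.compat_left (hab.compat_right (hp.1 _ rfl))

theorem IsPath.of_forall₂ (hp : IsPath E x y p) (hq : ∀ f ∈ q, f ∈ E')
    (h : List.Forall₂ WeaklyDominates q p) : IsPath E' x y q := by
  obtain ⟨hne, -, hhead, hlast, hchain⟩ := hp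
  refine ⟨?_, hq, ?_, ?_, isChain_compat_of_forall₂ h hchain⟩
  · rintro rfl
    exact hne (List.forall₂_nil_left_iff.1 h)
  · exact (h.head?_rel.map_eq fun _ _ hab => hab.1).trans hhead
  · exact (h.getLast?_rel.map_eq fun _ _ hab => hab.2.1).trans hlast

theorem startT_le_of_forall₂ (h : List.Forall₂ WeaklyDominates q p) : startT p ≤ startT q :=
  h.head?_rel.getD_map (r := (· ≥ ·)) (fun _ _ hab => hab.2.2.1) le_rfl

theorem endT_le_of_forall₂ (h : List.Forall₂ WeaklyDominates q p) : endT q ≤ endT p :=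
  h.getLast?_rel.getD_map (r := (· ≤ ·)) (fun _ _ hab => hab.2.2.2) le_rfl

theorem IsPath.mono (hp : IsPath E x y p) (hE : E ⊆ E') : IsPath E' x y p :=
  ⟨hp.1, fun f hf => hE (hp.2.1 f hf), hp.2.2⟩

theorem eaTime_le_of_forall_isPath
    (h : ∀ p, IsPath E x y p → ∃ q, IsPath E' x y q ∧ startT p ≤ startT q ∧ endT q ≤ endT p)
    (tα tω : ℝ) : eaTime E' x y tα tω ≤ eaTime E x y tα tω := by
  refine le_sInf ?_
  rintro _ ⟨p, hp, hstart, hend, rfl⟩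
  obtain ⟨q, hq, hqs, hqe⟩ := h p hp
  calc eaTime E' x y tα tω ≤ ((endT q : ℝ) : EReal) :=
        sInf_le ⟨q, hq, hstart.trans hqs, hqe.trans hend, rfl⟩
    _ ≤ ((endT p : ℝ) : EReal) := by exact_mod_cast hqe

theorem eaTime_le_of_subset (hE : E ⊆ E') (tα tω : ℝ) :
    eaTime E' x y tα tω ≤ eaTime E x y tα tω :=
  eaTime_le_of_forall_isPath (fun p hp => ⟨p, hp.mono hE, le_rfl, le_rfl⟩) tα tω

end PathDomination

theorem List.exists_forall₂_of_forall_mem_exists {α β : Type*} {R : α → β → Prop} {P : α → Prop}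
    {l : List β} (h : ∀ b ∈ l, ∃ a, P a ∧ R a b) : ∃ l', (∀ a ∈ l', P a) ∧ List.Forall₂ R l' l := by
  induction l with
  | nil => exact ⟨[], by simp, .nil⟩
  | cons b l ih =>
    obtain ⟨a, ha, hab⟩ := h b List.mem_cons_self
    obtain ⟨l', hl', hll'⟩ := ih fun b hb => h b (List.mem_cons_of_mem _ hb)
    exact ⟨a :: l', by simpa [ha] using hl', .cons hab hll'⟩

theorem exists_undominated_weaklyDominates {E : Set (TEdge V)} (hE : E.Finite) {f : TEdge V}
    (hf : f ∈ E) : ∃ g, g ∈ {g ∈ E | ¬ ∃ h ∈ E, Dominates h g} ∧ WeaklyDominates g f := by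
  have hS : {g ∈ E | WeaklyDominates g f}.Finite := hE.subset fun g hg => hg.1
  obtain ⟨g, ⟨hgE, hgf⟩, hmin⟩ :=
    hS.exists_minimalFor TEdge.len _ ⟨f, hf, WeaklyDominates.refl f⟩
  refine ⟨g, ⟨hgE, ?_⟩, hgf⟩
  rintro ⟨h, hhE, hhg⟩
  exact hhg.len_lt.not_ge (hmin ⟨hhE, hhg.weaklyDominates.trans hgf⟩ hhg.len_lt.le)

theorem stmt8_general (E : Set (TEdge V)) (hE : E.Finite) (e e' : TEdge V)
    (he' : e' ∈ E) (hd : Dominates e' e) :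
    (∀ (x y : V) (A C : List (TEdge V)), IsPath E x y (A ++ e :: C) →
      IsPath E x y (A ++ e' :: C) ∧
      startT (A ++ e :: C) ≤ startT (A ++ e' :: C) ∧
      endT (A ++ e' :: C) ≤ endT (A ++ e :: C)) ∧
    (∀ (x y : V) (tα tω : ℝ), eaTime E x y tα tω =
      eaTime {f ∈ E | ¬ ∃ g ∈ E, Dominates g f} x y tα tω) := by
  refine ⟨fun x y A C hp => ?_, fun x y tα tω => ?_⟩
  · have hrefl (l : List (TEdge V)) : List.Forall₂ WeaklyDominates l l :=
      List.forall₂_same.2 fun f _ => WeaklyDominates.refl f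
    have hswap : List.Forall₂ WeaklyDominates (A ++ e' :: C) (A ++ e :: C) :=
      List.rel_append (hrefl A) (.cons hd.weaklyDominates (hrefl C))
    have hmem : ∀ f ∈ A ++ e' :: C, f ∈ E := by
      intro f hf
      simp only [List.mem_append, List.mem_cons] at hf
      rcases hf with hf | rfl | hf
      · exact hp.2.1 f (List.mem_append_left _ hf)
      · exact he'
      · exact hp.2.1 f (List.mem_append_right _ (List.mem_cons_of_mem _ hf))
    exact ⟨hp.of_forall₂ hmem hswap, startT_le_of_forall₂ hswap, endT_le_of_forall₂ hswap⟩
  · refine le_antisymm (eaTime_le_of_subset (fun f hf => hf.1) tα tω)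
      (eaTime_le_of_forall_isPath (fun p hp => ?_) tα tω)
    obtain ⟨q, hq, hqp⟩ := List.exists_forall₂_of_forall_mem_exists
      fun f hf => exists_undominated_weaklyDominates hE (hp.2.1 f hf)
    exact ⟨q, hp.of_forall₂ hq hqp, startT_le_of_forall₂ hqp, endT_le_of_forall₂ hqp⟩

/-- If `e` is dominated by `e'`, then every temporal path using `e` yields,
by replacing `e` with `e'`, a temporal path with the same vertex sequence,
no-earlier start and no-later end; consequently removing dominated edges does
not change any earliest-arrival time within any time window. -/
theorem stmt8 (E : Set (TEdge V)) (hE : E.Finite) (e e' : TEdge V)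
    (he : e ∈ E) (he' : e' ∈ E) (hd : Dominates e' e) :
    (∀ (x y : V) (A C : List (TEdge V)), IsPath E x y (A ++ e :: C) →
      IsPath E x y (A ++ e' :: C) ∧
      startT (A ++ e :: C) ≤ startT (A ++ e' :: C) ∧
      endT (A ++ e' :: C) ≤ endT (A ++ e :: C)) ∧
    (∀ (x y : V) (tα tω : ℝ), eaTime E x y tα tω =
      eaTime {f ∈ E | ¬ ∃ g ∈ E, Dominates g f} x y tα tω) :=
  stmt8_general E hE e e' he' hd
end

section
/- The single-pass reverse edge-stream algorithm that initializes τ[v] := fin[v] for all v and, scanning temporal edges (u,v,t,λ) in nonincreasing order of starting time t, updates τ[u] := max(τ[u], t) whenever t ≥ t_α and t+λ ≤ τ[v], computes for each vertex u the multiple-target latest-departure path time from u within the window [t_α, t_ω]. -/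
open scoped Classical

variable {V : Type}

/-- One step of the reverse edge-stream latest-departure algorithm: scanning
edge `e`, update `τ e.src` to `max (τ e.src) e.t` whenever `tα ≤ e.t` and
`e.t + e.len ≤ τ e.dst`. -/
noncomputable def stepLD (tα : ℝ) (τ : V → EReal) (e : TEdge V) : V → EReal :=
  fun v =>
    if v = e.src ∧ tα ≤ e.t ∧ ((e.t + e.len : ℝ) : EReal) ≤ τ e.dst then
      max (τ v) ((e.t : ℝ) : EReal)
    else τ v

/-- The multiple-target latest-departure time from `u`: the maximum over
`fin u` (staying at `u`) and the starting times of temporal paths from `u`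
whose edges start no earlier than `tα` and which end at some vertex `v` no
later than `fin v`. -/
noncomputable def mtldpTime (E : Set (TEdge V)) (fin : V → EReal) (tα : ℝ) (u : V) : EReal :=
  sSup {s : EReal | s = fin u ∨ ∃ p v, IsPath E u v p ∧ (∀ e ∈ p, tα ≤ e.t) ∧
    ((endT p : ℝ) : EReal) ≤ fin v ∧ s = ((startT p : ℝ) : EReal)}

/-!
A temporal path can traverse the first edge `e` of the stream only as its last edge: every
other edge starts no later than `e`, while a successor of `e` would have to start after
`e.t + e.len > e.t`. So the MTLDP times over the edges `insert e T` with final times `fin` are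
the MTLDP times over `T` with final times `stepLD tα fin e`, which let `e.src` count as reached
by time `e.t` whenever `e` can be taken and still arrive in time. Induction along the stream
then gives the theorem.
-/

lemma startT_append_singleton {p : List (TEdge V)} (hp : p ≠ []) (f : TEdge V) :
    startT (p ++ [f]) = startT p := by
  obtain ⟨g, q, rfl⟩ := List.exists_cons_of_ne_nil hp
  rfl

lemma endT_append_singleton (p : List (TEdge V)) (f : TEdge V) :
    endT (p ++ [f]) = f.t + f.len := by
  simp [endT]

lemma isPath_iff {E : Set (TEdge V)} {x y : V} {p : List (TEdge V)} :
    IsPath E x y p ↔ p ≠ [] ∧ (∀ e ∈ p, e ∈ E) ∧ p.head?.map TEdge.src = some x ∧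
      p.getLast?.map TEdge.dst = some y ∧ List.IsChain compat p :=
  Iff.rfl

namespace IsPath

variable {E F : Set (TEdge V)} {u v : V} {p : List (TEdge V)}

lemma ne_nil (hp : IsPath E u v p) : p ≠ [] := hp.1

lemma mem_edgeSet (hp : IsPath E u v p) : ∀ e ∈ p, e ∈ E := hp.2.1

lemma isChain (hp : IsPath E u v p) : List.IsChain compat p := hp.2.2.2.2

lemma of_edges_mem (hp : IsPath E u v p) (hF : ∀ e ∈ p, e ∈ F) : IsPath F u v p :=
  ⟨hp.1, hF, hp.2.2⟩

lemma edgeSet_nonempty (hp : IsPath E u v p) : E.Nonempty :=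
  let ⟨e, he⟩ := List.exists_mem_of_ne_nil p hp.ne_nil
  ⟨e, hp.mem_edgeSet e he⟩

end IsPath

lemma isPath_singleton_iff {E : Set (TEdge V)} {u v : V} {f : TEdge V} :
    IsPath E u v [f] ↔ f ∈ E ∧ f.src = u ∧ f.dst = v := by
  simp [isPath_iff]

lemma isPath_append_singleton_iff {E : Set (TEdge V)} {u v : V} {p : List (TEdge V)}
    (hp : p ≠ []) (f : TEdge V) :
    IsPath E u v (p ++ [f]) ↔ IsPath E u f.src p ∧ endT p ≤ f.t ∧ f ∈ E ∧ f.dst = v := by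
  obtain ⟨q, g, rfl⟩ := (List.eq_nil_or_concat' p).resolve_left hp
  simp only [isPath_iff, endT, compat, List.isChain_append, List.head?_append]
  aesop

lemma le_stepLD_iff {tα : ℝ} {τ : V → EReal} {e : TEdge V} {v : V} {x : EReal} :
    x ≤ stepLD tα τ e v ↔ x ≤ τ v ∨
      (v = e.src ∧ tα ≤ e.t ∧ ((e.t + e.len : ℝ) : EReal) ≤ τ e.dst ∧ x ≤ (e.t : EReal)) := by
  unfold stepLD
  split_ifs with h
  · rw [le_max_iff]; tauto
  · tauto

lemma stepLD_le_iff {tα : ℝ} {τ : V → EReal} {e : TEdge V} {v : V} {x : EReal} :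
    stepLD tα τ e v ≤ x ↔ τ v ≤ x ∧
      (v = e.src → tα ≤ e.t → ((e.t + e.len : ℝ) : EReal) ≤ τ e.dst → (e.t : EReal) ≤ x) := by
  unfold stepLD
  split_ifs with h
  · rw [max_le_iff]; tauto
  · tauto

lemma notMem_of_isChain_append_singleton {e f : TEdge V} {q : List (TEdge V)}
    (hchain : List.IsChain compat (q ++ [f])) (hmax : ∀ g ∈ q ++ [f], g.t ≤ e.t)
    (hlen : 0 < e.len) : e ∉ q := by
  intro he
  obtain ⟨a, b, rfl⟩ := List.append_of_mem he
  obtain ⟨g, r, hgr⟩ : ∃ g r, b ++ [f] = g :: r := List.exists_cons_of_ne_nil (by simp)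
  rw [List.append_assoc, List.cons_append, hgr] at hchain hmax
  have hcompat : compat e g :=
    (List.isChain_cons_cons.mp (List.isChain_append.mp hchain).2.1).1
  have hg : g.t ≤ e.t := hmax g (by simp)
  linarith [hcompat.2]

def IsTargetPath (E : Set (TEdge V)) (fin : V → EReal) (tα : ℝ) (u : V)
    (p : List (TEdge V)) : Prop :=
  ∃ v, IsPath E u v p ∧ (∀ e ∈ p, tα ≤ e.t) ∧ ((endT p : ℝ) : EReal) ≤ fin v

lemma IsTargetPath.mono {E F : Set (TEdge V)} {fin fin' : V → EReal} {tα : ℝ} {u : V}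
    {p : List (TEdge V)} (hp : IsTargetPath E fin tα u p) (hF : ∀ e ∈ p, e ∈ F)
    (hfin : ∀ v, fin v ≤ fin' v) : IsTargetPath F fin' tα u p :=
  let ⟨v, hpath, htα, hend⟩ := hp
  ⟨v, hpath.of_edges_mem hF, htα, hend.trans (hfin v)⟩

section mtldpTime

variable {E T : Set (TEdge V)} {fin : V → EReal} {tα : ℝ} {u : V} {e : TEdge V}

lemma fin_le_mtldpTime : fin u ≤ mtldpTime E fin tα u :=
  le_sSup (Or.inl rfl)

lemma IsTargetPath.startT_le_mtldpTime {p : List (TEdge V)} (hp : IsTargetPath E fin tα u p) :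
    ((startT p : ℝ) : EReal) ≤ mtldpTime E fin tα u :=
  let ⟨v, hpath, htα, hend⟩ := hp
  le_sSup (Or.inr ⟨p, v, hpath, htα, hend, rfl⟩)

lemma mtldpTime_le {b : EReal} (hfin : fin u ≤ b)
    (hpaths : ∀ p, IsTargetPath E fin tα u p → ((startT p : ℝ) : EReal) ≤ b) :
    mtldpTime E fin tα u ≤ b := by
  refine sSup_le ?_
  rintro s (rfl | ⟨p, v, hpath, htα, hend, rfl⟩)
  exacts [hfin, hpaths p ⟨v, hpath, htα, hend⟩]

lemma mtldpTime_empty : mtldpTime ∅ fin tα u = fin u :=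
  le_antisymm
    (mtldpTime_le le_rfl fun _ ⟨_, hpath, _⟩ =>
      absurd hpath.edgeSet_nonempty Set.not_nonempty_empty)
    fin_le_mtldpTime

lemma mtldpTime_insert_le (hlen : 0 < e.len) (hmax : ∀ f ∈ T, f.t ≤ e.t) :
    mtldpTime (insert e T) fin tα u ≤ mtldpTime T (stepLD tα fin e) tα u := by
  have hstep : ∀ v, fin v ≤ stepLD tα fin e v := fun v => le_stepLD_iff.mpr (Or.inl le_rfl)
  refine mtldpTime_le ((hstep u).trans fin_le_mtldpTime) fun p hp => ?_
  obtain ⟨v, hpath, htα, hend⟩ := hp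
  obtain ⟨q, f, rfl⟩ := (List.eq_nil_or_concat' p).resolve_left hpath.ne_nil
  have hmax' : ∀ g ∈ insert e T, g.t ≤ e.t := by
    rintro g (rfl | hg)
    exacts [le_rfl, hmax g hg]
  have hnotMem : e ∉ q := notMem_of_isChain_append_singleton hpath.isChain
    (fun g hg => hmax' g (hpath.mem_edgeSet g hg)) hlen
  by_cases hef : e = f
  · subst hef
    have hcond : tα ≤ e.t ∧ ((e.t + e.len : ℝ) : EReal) ≤ fin e.dst := by
      have hv : e.dst = v := by simpa using hpath.2.2.2.1
      rw [endT_append_singleton] at hend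
      exact ⟨htα e (by simp), hv ▸ hend⟩
    rcases eq_or_ne q [] with rfl | hq
    · obtain ⟨-, rfl, -⟩ := isPath_singleton_iff.mp hpath
      exact le_trans (le_stepLD_iff.mpr (Or.inr ⟨rfl, hcond.1, hcond.2, le_rfl⟩)) fin_le_mtldpTime
    · obtain ⟨hqpath, hqend, -⟩ := (isPath_append_singleton_iff hq e).mp hpath
      rw [startT_append_singleton hq]
      refine IsTargetPath.startT_le_mtldpTime ⟨e.src, hqpath.of_edges_mem fun g hg => ?_,
        fun g hg => htα g (by simp [hg]), ?_⟩
      · exact Set.mem_of_mem_insert_of_ne (hqpath.mem_edgeSet g hg)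
          (ne_of_mem_of_not_mem hg hnotMem)
      · exact le_stepLD_iff.mpr (Or.inr ⟨rfl, hcond.1, hcond.2, EReal.coe_le_coe_iff.mpr hqend⟩)
  · have hT : ∀ g ∈ q ++ [f], g ∈ T := fun g hg =>
      Set.mem_of_mem_insert_of_ne (hpath.mem_edgeSet g hg) fun hge => by simp_all
    exact (IsTargetPath.mono ⟨v, hpath, htα, hend⟩ hT hstep).startT_le_mtldpTime

lemma le_mtldpTime_insert :
    mtldpTime T (stepLD tα fin e) tα u ≤ mtldpTime (insert e T) fin tα u := by
  refine mtldpTime_le ?_ fun p hp => ?_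
  · refine stepLD_le_iff.mpr ⟨fin_le_mtldpTime, fun hu htα hend => ?_⟩
    exact IsTargetPath.startT_le_mtldpTime (p := [e])
      ⟨e.dst, isPath_singleton_iff.mpr ⟨Set.mem_insert _ _, hu.symm, rfl⟩, by simpa,
        by simpa [endT]⟩
  · obtain ⟨v, hpath, htα, hend⟩ := hp
    have hpath' : IsPath (insert e T) u v p :=
      hpath.of_edges_mem fun g hg => Set.mem_insert_of_mem _ (hpath.mem_edgeSet g hg)
    rcases le_stepLD_iff.mp hend with hend | ⟨rfl, hte, hdst, hpe⟩
    · exact IsTargetPath.startT_le_mtldpTime ⟨v, hpath', htα, hend⟩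
    · rw [← startT_append_singleton hpath.ne_nil e]
      refine IsTargetPath.startT_le_mtldpTime
        ⟨e.dst, (isPath_append_singleton_iff hpath.ne_nil e).mpr
          ⟨hpath', EReal.coe_le_coe_iff.mp hpe, Set.mem_insert _ _, rfl⟩, ?_, ?_⟩
      · simpa [or_imp, forall_and] using And.intro htα hte
      · rwa [endT_append_singleton]

lemma mtldpTime_insert (hlen : 0 < e.len) (hmax : ∀ f ∈ T, f.t ≤ e.t) :
    mtldpTime (insert e T) fin tα u = mtldpTime T (stepLD tα fin e) tα u :=
  le_antisymm (mtldpTime_insert_le hlen hmax) le_mtldpTime_insert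

end mtldpTime

theorem stmt12_general (l : List (TEdge V)) (tα : ℝ)
    (hsort : l.Pairwise (fun e f => f.t ≤ e.t))
    (hpos : ∀ e ∈ l, 0 < e.len)
    (fin : V → EReal) :
    ∀ u, (l.foldl (stepLD tα) fin) u = mtldpTime {e | e ∈ l} fin tα u := by
  induction l generalizing fin with
  | nil => simp [mtldpTime_empty]
  | cons e l ih =>
    intro u
    obtain ⟨hmax, hsort⟩ := List.pairwise_cons.mp hsort
    have hedges : {f | f ∈ e :: l} = insert e {f | f ∈ l} := by ext; simp
    rw [List.foldl_cons, ih hsort (fun f hf => hpos f (List.mem_cons_of_mem e hf)), hedges]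
    exact (mtldpTime_insert (hpos e List.mem_cons_self) hmax).symm

/-- Correctness of the single-pass reverse edge-stream MTLDP algorithm:
folding `stepLD` over the reverse edge stream (sorted by nonincreasing starting
time) starting from `fin` computes the MTLDP time of every vertex within
`[tα, tω]`. -/
theorem stmt12 (l : List (TEdge V)) (tα tω : ℝ)
    (hsort : l.Pairwise (fun e f => f.t ≤ e.t))
    (hpos : ∀ e ∈ l, 0 < e.len)
    (fin : V → EReal)
    (hfin : ∀ v, fin v = ⊥ ∨ ((tα : EReal) ≤ fin v ∧ fin v ≤ (tω : EReal))) :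
    ∀ u, (l.foldl (stepLD tα) fin) u = mtldpTime {e | e ∈ l} fin tα u :=
  stmt12_general l tα hsort hpos fin
end

section
/- Let τ[b] be the earliest-arrival time from a source x to each beer vertex b within [t_α, t_ω], and for each b let t[b] := min{ time ∈ T_b : time ≥ τ[b] } (∞ if none exists or if t[b] > t_ω). Then for every vertex v, the earliest-arrival beer path time from x to v within [t_α, t_ω] equals the multiple-source earliest-arrival time to v with initial times init[b] = t[b] for b ∈ B and init[u] = ∞ for u ∉ B. -/
/-!
A beer path to `v` splits at its beer vertex `b` and active time `t` into a path reaching `b` by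
time `t` and a path leaving `b` no earlier than `t`; the multiple-source problem keeps only the
second part and replaces the first by the least usable active time `t[b]`. Both sides are thus
infima over the same decompositions, provided `t[b] ≤ s` for real `s` really produces an active
time `t ≤ s` at which `b` can be reached. That holds because the infima defining the
earliest-arrival time and `t[b]` are attained: the former ranges over the finitely many arrival
times `e.t + e.len` of edges, the latter over the finite set `T b`.
-/

open scoped Classical

variable {V : Type}

/-- The earliest-arrival time from `x` to `b` within `[tα, tω]`
(`tα` if `b = x`, i.e. we are already at the source at time `tα`). -/
noncomputable def eaArr (E : Set (TEdge V)) (x : V) (tα tω : ℝ) (b : V) : EReal :=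
  sInf {a : EReal | (b = x ∧ a = (tα : EReal)) ∨
    ∃ p, IsPath E x b p ∧ tα ≤ startT p ∧ endT p ≤ tω ∧ a = ((endT p : ℝ) : EReal)}

/-- `t[b]`: the minimum active time of beer vertex `b` that is no earlier than
its earliest-arrival time and no later than `tω` (⊤ if none, or if `b ∉ B`). -/
noncomputable def beerInit (E : Set (TEdge V)) (B : Set V) (T : V → Set ℝ)
    (x : V) (tα tω : ℝ) : V → EReal :=
  fun b =>
    if b ∈ B then
      sInf {s : EReal | ∃ time ∈ T b, eaArr E x tα tω b ≤ (time : EReal) ∧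
        time ≤ tω ∧ s = (time : EReal)}
    else ⊤

/-- The earliest-arrival beer path time from `x` to `v` within `[tα, tω]`:
the minimum time at which one can be at `v` having visited some beer vertex
`b ∈ B` at an active time `t ∈ T b` (reaching `b` from `x` no later than `t`,
then reaching `v` from `b` departing no earlier than `t`). -/
noncomputable def beerEaTime (E : Set (TEdge V)) (B : Set V) (T : V → Set ℝ)
    (x : V) (tα tω : ℝ) (v : V) : EReal :=
  sInf {a : EReal | ∃ b ∈ B, ∃ t ∈ T b, tα ≤ t ∧ t ≤ tω ∧
    (b = x ∨ ∃ q, IsPath E x b q ∧ tα ≤ startT q ∧ endT q ≤ t) ∧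
    ((v = b ∧ a = (t : EReal)) ∨
      ∃ r, IsPath E b v r ∧ t ≤ startT r ∧ endT r ≤ tω ∧ a = ((endT r : ℝ) : EReal))}

theorem Set.Finite.sInf_mem_or_eq_top {α : Type*} [CompleteLinearOrder α] {s : Set α}
    (hs : s.Finite) : sInf s ∈ s ∨ sInf s = ⊤ := by
  rcases s.eq_empty_or_nonempty with rfl | hne
  · exact Or.inr sInf_empty
  · exact Or.inl (hne.csInf_mem hs)

@[simp]
theorem startT_cons (e : TEdge V) (p : List (TEdge V)) : startT (e :: p) = e.t := rfl

theorem startT_le_endT : ∀ {p : List (TEdge V)}, List.IsChain compat p →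
    (∀ e ∈ p, 0 ≤ e.len) → startT p ≤ endT p
  | [], _, _ => le_rfl
  | [e], _, hlen => by simpa [endT] using hlen e (by simp)
  | e :: f :: l, hc, hlen => by
      obtain ⟨hef, hc⟩ := List.isChain_cons_cons.mp hc
      have ih := startT_le_endT hc fun g hg => hlen g (List.mem_cons_of_mem _ hg)
      have he := hlen e (by simp)
      simp only [startT_cons] at ih ⊢
      rw [show endT (e :: f :: l) = endT (f :: l) by simp [endT, List.getLast?_cons_cons]]
      linarith [hef.2]

theorem IsPath.endT_mem {E : Set (TEdge V)} {x y : V} {p : List (TEdge V)} (hp : IsPath E x y p) :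
    endT p ∈ (fun e => e.t + e.len) '' E := by
  obtain ⟨e, he⟩ := Option.ne_none_iff_exists'.mp (List.getLast?_eq_none_iff.not.mpr hp.1)
  exact ⟨e, hp.2.1 e (List.mem_of_getLast? he), by simp [endT, he]⟩

theorem eaArr_le_coe_iff {E : Set (TEdge V)} (hE : E.Finite) (hlen : ∀ e ∈ E, 0 ≤ e.len)
    {x b : V} {tα tω c : ℝ} (hc : c ≤ tω) :
    eaArr E x tα tω b ≤ c ↔
      tα ≤ c ∧ (b = x ∨ ∃ q, IsPath E x b q ∧ tα ≤ startT q ∧ endT q ≤ c) := by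
  constructor
  · intro h
    have hfin : {a : EReal | (b = x ∧ a = (tα : EReal)) ∨ ∃ p, IsPath E x b p ∧
        tα ≤ startT p ∧ endT p ≤ tω ∧ a = ((endT p : ℝ) : EReal)}.Finite := by
      refine ((hE.image fun e => e.t + e.len).image ((↑) : ℝ → EReal)).insert (tα : EReal)
        |>.subset ?_
      rintro a (⟨-, rfl⟩ | ⟨p, hp, -, -, rfl⟩)
      exacts [Set.mem_insert _ _, Set.mem_insert_of_mem _ ⟨_, hp.endT_mem, rfl⟩]
    rcases hfin.sInf_mem_or_eq_top with hmem | htop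
    · rw [eaArr] at h
      rcases hmem with ⟨hbx, heq⟩ | ⟨p, hp, hαp, -, heq⟩
      · rw [heq, EReal.coe_le_coe_iff] at h
        exact ⟨h, Or.inl hbx⟩
      · rw [heq, EReal.coe_le_coe_iff] at h
        exact ⟨hαp.trans <| (startT_le_endT hp.2.2.2.2 fun e he => hlen e (hp.2.1 e he)).trans h,
          Or.inr ⟨p, hp, hαp, h⟩⟩
    · rw [eaArr, htop, top_le_iff] at h
      exact absurd h (EReal.coe_ne_top c)
  · rintro ⟨hαc, rfl | ⟨q, hq, hαq, hqc⟩⟩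
    · exact le_trans (sInf_le (Or.inl ⟨rfl, rfl⟩)) (EReal.coe_le_coe hαc)
    · exact le_trans (sInf_le (Or.inr ⟨q, hq, hαq, hqc.trans hc, rfl⟩)) (EReal.coe_le_coe hqc)

section beerInit

variable {E : Set (TEdge V)} {B : Set V} {T : V → Set ℝ} {x b : V} {tα tω t : ℝ}

theorem beerInit_le_coe (hE : E.Finite) (hlen : ∀ e ∈ E, 0 ≤ e.len) (hb : b ∈ B) (ht : t ∈ T b)
    (hαt : tα ≤ t) (htω : t ≤ tω)
    (hreach : b = x ∨ ∃ q, IsPath E x b q ∧ tα ≤ startT q ∧ endT q ≤ t) :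
    beerInit E B T x tα tω b ≤ t := by
  rw [beerInit, if_pos hb]
  exact sInf_le ⟨t, ht, (eaArr_le_coe_iff hE hlen htω).mpr ⟨hαt, hreach⟩, htω, rfl⟩

theorem beerInit_eq_top_or_exists (hE : E.Finite) (hlen : ∀ e ∈ E, 0 ≤ e.len)
    (hT : (T b).Finite) :
    beerInit E B T x tα tω b = ⊤ ∨ b ∈ B ∧ ∃ t ∈ T b, tα ≤ t ∧ t ≤ tω ∧
      (b = x ∨ ∃ q, IsPath E x b q ∧ tα ≤ startT q ∧ endT q ≤ t) ∧
      beerInit E B T x tα tω b = t := by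
  by_cases hb : b ∈ B
  · rw [beerInit, if_pos hb]
    have hfin : {s : EReal | ∃ time ∈ T b, eaArr E x tα tω b ≤ (time : EReal) ∧
        time ≤ tω ∧ s = (time : EReal)}.Finite :=
      (hT.image ((↑) : ℝ → EReal)).subset fun _ ⟨t, ht, _, _, hs⟩ => ⟨t, ht, hs.symm⟩
    rcases hfin.sInf_mem_or_eq_top with ⟨t, ht, hea, htω, heq⟩ | htop
    · obtain ⟨hαt, hreach⟩ := (eaArr_le_coe_iff hE hlen htω).mp hea
      exact Or.inr ⟨hb, t, ht, hαt, htω, hreach, heq⟩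
    · exact Or.inl htop
  · exact Or.inl (if_neg hb)

end beerInit

theorem stmt13_general (E : Set (TEdge V)) (hE : E.Finite) (hpos : ∀ e ∈ E, 0 < e.len)
    (B : Set V) (T : V → Set ℝ) (hT : ∀ b, (T b).Finite)
    (x : V) (tα tω : ℝ) :
    ∀ v, beerEaTime E B T x tα tω v =
      sInf {a : EReal | a = beerInit E B T x tα tω v ∨
        ∃ p w, IsPath E w v p ∧ tα ≤ startT p ∧ endT p ≤ tω ∧
          beerInit E B T x tα tω w ≤ (startT p : EReal) ∧
          a = ((endT p : ℝ) : EReal)} := by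
  intro v
  have hlen : ∀ e ∈ E, 0 ≤ e.len := fun e he => (hpos e he).le
  apply le_antisymm
  · refine le_sInf ?_
    rintro a (rfl | ⟨p, w, hp, -, hpω, hinit, rfl⟩)
    · rcases beerInit_eq_top_or_exists hE hlen (hT v) with htop | ⟨hv, t, ht, hαt, htω, hreach, heq⟩
      · exact htop ▸ le_top
      · exact heq ▸ sInf_le ⟨v, hv, t, ht, hαt, htω, hreach, Or.inl ⟨rfl, rfl⟩⟩
    · rcases beerInit_eq_top_or_exists hE hlen (hT w) with htop | ⟨hw, t, ht, hαt, htω, hreach, heq⟩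
      · exact absurd (top_le_iff.mp (htop ▸ hinit)) (EReal.coe_ne_top _)
      · refine sInf_le ⟨w, hw, t, ht, hαt, htω, hreach, Or.inr ⟨p, hp, ?_, hpω, rfl⟩⟩
        exact EReal.coe_le_coe_iff.mp (heq ▸ hinit)
  · refine le_sInf ?_
    rintro a ⟨b, hb, t, ht, hαt, htω, hreach, ⟨rfl, rfl⟩ | ⟨r, hr, htr, hrω, rfl⟩⟩
    · exact le_trans (sInf_le (Or.inl rfl)) (beerInit_le_coe hE hlen hb ht hαt htω hreach)
    · refine sInf_le (Or.inr ⟨r, b, hr, hαt.trans htr, hrω, ?_, rfl⟩)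
      exact (beerInit_le_coe hE hlen hb ht hαt htω hreach).trans (EReal.coe_le_coe htr)

/-- The earliest-arrival beer path time from `x` to any vertex `v` within
`[tα, tω]` equals the multiple-source earliest-arrival time to `v` with initial
times `init b = t[b]` for beer vertices and `⊤` elsewhere. -/
theorem stmt13 (E : Set (TEdge V)) (hE : E.Finite) (hpos : ∀ e ∈ E, 0 < e.len)
    (B : Set V) (T : V → Set ℝ) (hT : ∀ b, (T b).Finite)
    (x : V) (tα tω : ℝ) (hαω : tα ≤ tω) :
    ∀ v, beerEaTime E B T x tα tω v =
      sInf {a : EReal | a = beerInit E B T x tα tω v ∨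
        ∃ p w, IsPath E w v p ∧ tα ≤ startT p ∧ endT p ≤ tω ∧
          beerInit E B T x tα tω w ≤ (startT p : EReal) ∧
          a = ((endT p : ℝ) : EReal)} :=
  stmt13_general E hE hpos B T hT x tα tω
end

section
/- In a temporal graph, the property that every prefix of every earliest-arrival path is itself an earliest-arrival path can fail: there exists a temporal graph with vertices x, y and an earliest-arrival x-y path having a prefix that is not an earliest-arrival path to its endpoint. -/
open scoped Classical

variable {V : Type}

/-- The prefix property can fail for some earliest-arrival paths: there is a
temporal graph with an earliest-arrival `x`-`y` path having a nonempty prefix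
that is not an earliest-arrival path to its endpoint. -/
theorem stmt14 : ∃ (V : Type) (E : Set (TEdge V)) (x y : V)
    (p q : List (TEdge V)) (w : V),
    IsPath E x y p ∧ (∀ p', IsPath E x y p' → endT p ≤ endT p') ∧
    q ≠ [] ∧ q <+: p ∧ q.getLast?.map TEdge.dst = some w ∧
    ∃ p', IsPath E x w p' ∧ endT p' < endT q := by
  refine ⟨ℕ, {⟨0,1,5,1⟩, ⟨1,2,6,1⟩, ⟨0,1,0,1⟩}, 0, 2,
    [⟨0,1,5,1⟩, ⟨1,2,6,1⟩], [⟨0,1,5,1⟩], 1, ?_, ?_, by simp,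
    ⟨[⟨1,2,6,1⟩], rfl⟩, by simp, ⟨[⟨0,1,0,1⟩], ?_, ?_⟩⟩
  · refine ⟨by simp, ?_, by simp, by simp, ?_⟩
    · intro e he
      simp only [List.mem_cons, List.not_mem_nil, or_false] at he
      rcases he with h | h <;> simp [h]
    · exact List.isChain_cons_cons.2 ⟨⟨rfl, by norm_num⟩, List.isChain_singleton _⟩
  · intro p' hp'
    obtain ⟨hne, hE, _, hlast, _⟩ := hp'
    rw [Option.map_eq_some_iff] at hlast
    obtain ⟨l, hl, hld⟩ := hlast
    have hlE : l ∈ ({⟨0,1,5,1⟩, ⟨1,2,6,1⟩, ⟨0,1,0,1⟩} : Set (TEdge ℕ)) :=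
      hE l (by obtain ⟨h, rfl⟩ := List.mem_getLast?_eq_getLast hl; exact List.getLast_mem h)
    have hl2 : l = ⟨1,2,6,1⟩ := by
      rcases hlE with h | h | h
      · subst h; simp at hld
      · exact h
      · subst h; simp at hld
    simp [endT, hl, hl2]
  · refine ⟨by simp, ?_, by simp, by simp, List.isChain_singleton _⟩
    intro e he
    simp only [List.mem_cons, List.not_mem_nil, or_false] at he
    simp [he]
  · simp [endT]
end
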